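/- arXiv:2605.15747 — 3 statements merged into one kernel-verified Lean document; each statement's English description precedes it below -/
import Mathlib

section
/- For every θ ∈ [0,π] and all real numbers a, b with a² + b² = 1, the vector w := U(θ,0,0)·(a,b)ᵀ ∈ ℂ² satisfies |w₀|² = a²·cos²(θ/2) + b²·sin²(θ/2) and |w₁|² = a²·sin²(θ/2) + b²·cos²(θ/2). In other words, on initial states with real coefficients, the quantum pure strategy U(θ,0,0) reproduces exactly the statistics of the classical mixed strategy (p, 1−p) with p = cos²(θ/2). -/
open Complex Real Matrix

/-- The quantum pure strategy `U(θ,α,β) ∈ SU(2)`. -/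
noncomputable def Ustrat (θ α β : ℝ) : Matrix (Fin 2) (Fin 2) ℂ :=
  !![Complex.exp (Complex.I * α) * Real.cos (θ / 2),
      Complex.I * Complex.exp (Complex.I * β) * Real.sin (θ / 2);
    Complex.I * Complex.exp (-Complex.I * β) * Real.sin (θ / 2),
      Complex.exp (-Complex.I * α) * Real.cos (θ / 2)]

/-- On initial states with real coefficients, the quantum pure strategy `U(θ,0,0)`
reproduces exactly the statistics of the classical mixed strategy
`(p, 1−p)` with `p = cos²(θ/2)`. -/
theorem stmt_0 (θ : ℝ) (hθ : θ ∈ Set.Icc 0 Real.pi) (a b : ℝ) (hab : a ^ 2 + b ^ 2 = 1) :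
    ‖(Ustrat θ 0 0 *ᵥ ![(a : ℂ), (b : ℂ)]) 0‖ ^ 2
        = a ^ 2 * Real.cos (θ / 2) ^ 2 + b ^ 2 * Real.sin (θ / 2) ^ 2 ∧
      ‖(Ustrat θ 0 0 *ᵥ ![(a : ℂ), (b : ℂ)]) 1‖ ^ 2
        = a ^ 2 * Real.sin (θ / 2) ^ 2 + b ^ 2 * Real.cos (θ / 2) ^ 2 := by
  constructor <;>
  · rw [← Complex.normSq_eq_norm_sq]
    simp [-Complex.ofReal_cos, -Complex.ofReal_sin, Ustrat, mulVec, dotProduct,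
      Fin.sum_univ_two, Complex.normSq, Complex.add_re, Complex.add_im,
      Complex.mul_re, Complex.mul_im, Complex.I_re, Complex.I_im]
    ring
end

section
/- For every γ ∈ [0,π/2] and all θ_A, θ_B ∈ [0,π], the operator J(γ) commutes with U(θ_A,0,0) ⊗ U(θ_B,0,0): J(γ)·(U(θ_A,0,0)⊗U(θ_B,0,0)) = (U(θ_A,0,0)⊗U(θ_B,0,0))·J(γ). -/
open Complex Real Matrix Kronecker

/-- The Pauli matrix σx. -/
def sigmaX : Matrix (Fin 2) (Fin 2) ℂ := !![0, 1; 1, 0]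

/-- The EWL entangling operator `J(γ) = cos(γ/2)·(I⊗I) + i·sin(γ/2)·(σx⊗σx)`. -/
noncomputable def Jmat (γ : ℝ) : Matrix (Fin 2 × Fin 2) (Fin 2 × Fin 2) ℂ :=
  (Real.cos (γ / 2) : ℂ) • ((1 : Matrix (Fin 2) (Fin 2) ℂ) ⊗ₖ (1 : Matrix (Fin 2) (Fin 2) ℂ))
    + (Complex.I * Real.sin (γ / 2)) • (sigmaX ⊗ₖ sigmaX)

/-- `J(γ)` commutes with `U(θ_A,0,0) ⊗ U(θ_B,0,0)`. -/
theorem stmt_10 (γ : ℝ) (hγ : γ ∈ Set.Icc 0 (Real.pi / 2))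
    (θA θB : ℝ) (hθA : θA ∈ Set.Icc 0 Real.pi) (hθB : θB ∈ Set.Icc 0 Real.pi) :
    Jmat γ * (Ustrat θA 0 0 ⊗ₖ Ustrat θB 0 0)
      = (Ustrat θA 0 0 ⊗ₖ Ustrat θB 0 0) * Jmat γ := by
  ext ⟨i, j⟩ ⟨k, l⟩
  simp only [Jmat, Ustrat, sigmaX, Matrix.mul_apply, Fintype.sum_prod_type,
    Fin.sum_univ_two, Matrix.add_apply, Matrix.smul_apply, kroneckerMap_apply,
    Matrix.one_apply, smul_eq_mul]
  fin_cases i <;> fin_cases j <;> fin_cases k <;> fin_cases l <;>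
    simp <;> ring
end

section
/- (Classical subgame.) For every γ ∈ [0,π/2], all θ_A, θ_B ∈ [0,π], and all i,j ∈ {0,1}: |⟨ij| J(γ)† (U(θ_A,0,0)⊗U(θ_B,0,0)) J(γ) |00⟩|² = |⟨i|U(θ_A,0,0)|0⟩|² · |⟨j|U(θ_B,0,0)|0⟩|². Explicitly, setting p = cos²(θ_A/2) and q = cos²(θ_B/2), the four outcome probabilities are pq, p(1−q), (1−p)q, (1−p)(1−q), the classical mixed-strategy probabilities, independently of γ. -/
open Complex Real Matrix Kronecker

/-- The basis state `|ij⟩ = |i⟩⊗|j⟩` of `ℂ²⊗ℂ² ≅ ℂ⁴`. -/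
def ket (i j : Fin 2) : Fin 2 × Fin 2 → ℂ := fun p => if p = (i, j) then 1 else 0

/-- The Hermitian inner product `⟨v|w⟩` on `ℂ⁴`. -/
noncomputable def braket (v w : Fin 2 × Fin 2 → ℂ) : ℂ := ∑ p, (starRingEnd ℂ) (v p) * w p

/-- The EWL amplitude `⟨ij| J(γ)† (U_A⊗U_B) J(γ) |00⟩`. -/
noncomputable def amp (γ : ℝ) (UA UB : Matrix (Fin 2) (Fin 2) ℂ) (i j : Fin 2) : ℂ :=
  braket (ket i j) ((Jmat γ)ᴴ *ᵥ ((UA ⊗ₖ UB) *ᵥ (Jmat γ *ᵥ ket 0 0)))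

lemma amp00 (γ θA θB : ℝ) :
    amp γ (Ustrat θA 0 0) (Ustrat θB 0 0) 0 0 = Real.cos (θA/2) * Real.cos (θB/2) := by
  have h : ((Real.cos (γ/2) : ℂ))^2 + ((Real.sin (γ/2) : ℂ))^2 = 1 := by
    rw [← Complex.ofReal_pow, ← Complex.ofReal_pow, ← Complex.ofReal_add, Real.cos_sq_add_sin_sq, Complex.ofReal_one]
  simp only [amp, braket, Jmat, Ustrat, ket, sigmaX, Matrix.mulVec, Matrix.conjTranspose_apply,
    dotProduct, Fintype.sum_prod_type, Fin.sum_univ_two, Matrix.add_apply, Matrix.smul_apply,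
    Matrix.kroneckerMap_apply, Matrix.one_apply, Matrix.cons_val', Matrix.cons_val_zero,
    Matrix.cons_val_one, Matrix.head_cons, Matrix.head_fin_const, Matrix.empty_val',
    Matrix.cons_val_fin_one, smul_eq_mul]
  norm_num [Prod.ext_iff, Fin.ext_iff, ← Complex.ofReal_cos, ← Complex.ofReal_sin, Complex.conj_ofReal, Complex.I_mul_I]
  ring_nf at h ⊢
  have hI4 : (Complex.I)^4 = 1 := by norm_num [pow_succ, Complex.I_mul_I]
  have hI3 : (Complex.I)^3 = -Complex.I := by norm_num [pow_succ, Complex.I_mul_I]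
  try simp only [Complex.I_sq, hI3, hI4]
  linear_combination (Real.cos (θA * (1/2)) * Real.cos (θB * (1/2)) : ℂ) * h

lemma amp01 (γ θA θB : ℝ) :
    amp γ (Ustrat θA 0 0) (Ustrat θB 0 0) 0 1 = Complex.I * Real.cos (θA/2) * Real.sin (θB/2) := by
  have h : ((Real.cos (γ/2) : ℂ))^2 + ((Real.sin (γ/2) : ℂ))^2 = 1 := by
    rw [← Complex.ofReal_pow, ← Complex.ofReal_pow, ← Complex.ofReal_add, Real.cos_sq_add_sin_sq, Complex.ofReal_one]
  simp only [amp, braket, Jmat, Ustrat, ket, sigmaX, Matrix.mulVec, Matrix.conjTranspose_apply,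
    dotProduct, Fintype.sum_prod_type, Fin.sum_univ_two, Matrix.add_apply, Matrix.smul_apply,
    Matrix.kroneckerMap_apply, Matrix.one_apply, Matrix.cons_val', Matrix.cons_val_zero,
    Matrix.cons_val_one, Matrix.head_cons, Matrix.head_fin_const, Matrix.empty_val',
    Matrix.cons_val_fin_one, smul_eq_mul]
  norm_num [Prod.ext_iff, Fin.ext_iff, ← Complex.ofReal_cos, ← Complex.ofReal_sin, Complex.conj_ofReal, Complex.I_mul_I]
  ring_nf at h ⊢
  have hI4 : (Complex.I)^4 = 1 := by norm_num [pow_succ, Complex.I_mul_I]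
  have hI3 : (Complex.I)^3 = -Complex.I := by norm_num [pow_succ, Complex.I_mul_I]
  try simp only [Complex.I_sq, hI3, hI4]
  linear_combination (Complex.I * Real.cos (θA * (1/2)) * Real.sin (θB * (1/2)) : ℂ) * h

lemma amp10 (γ θA θB : ℝ) :
    amp γ (Ustrat θA 0 0) (Ustrat θB 0 0) 1 0 = Complex.I * Real.sin (θA/2) * Real.cos (θB/2) := by
  have h : ((Real.cos (γ/2) : ℂ))^2 + ((Real.sin (γ/2) : ℂ))^2 = 1 := by
    rw [← Complex.ofReal_pow, ← Complex.ofReal_pow, ← Complex.ofReal_add, Real.cos_sq_add_sin_sq, Complex.ofReal_one]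
  simp only [amp, braket, Jmat, Ustrat, ket, sigmaX, Matrix.mulVec, Matrix.conjTranspose_apply,
    dotProduct, Fintype.sum_prod_type, Fin.sum_univ_two, Matrix.add_apply, Matrix.smul_apply,
    Matrix.kroneckerMap_apply, Matrix.one_apply, Matrix.cons_val', Matrix.cons_val_zero,
    Matrix.cons_val_one, Matrix.head_cons, Matrix.head_fin_const, Matrix.empty_val',
    Matrix.cons_val_fin_one, smul_eq_mul]
  norm_num [Prod.ext_iff, Fin.ext_iff, ← Complex.ofReal_cos, ← Complex.ofReal_sin, Complex.conj_ofReal, Complex.I_mul_I]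
  ring_nf at h ⊢
  have hI4 : (Complex.I)^4 = 1 := by norm_num [pow_succ, Complex.I_mul_I]
  have hI3 : (Complex.I)^3 = -Complex.I := by norm_num [pow_succ, Complex.I_mul_I]
  try simp only [Complex.I_sq, hI3, hI4]
  linear_combination (Complex.I * Real.sin (θA * (1/2)) * Real.cos (θB * (1/2)) : ℂ) * h

lemma amp11 (γ θA θB : ℝ) :
    amp γ (Ustrat θA 0 0) (Ustrat θB 0 0) 1 1 = -(Real.sin (θA/2) * Real.sin (θB/2)) := by
  have h : ((Real.cos (γ/2) : ℂ))^2 + ((Real.sin (γ/2) : ℂ))^2 = 1 := by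
    rw [← Complex.ofReal_pow, ← Complex.ofReal_pow, ← Complex.ofReal_add, Real.cos_sq_add_sin_sq, Complex.ofReal_one]
  simp only [amp, braket, Jmat, Ustrat, ket, sigmaX, Matrix.mulVec, Matrix.conjTranspose_apply,
    dotProduct, Fintype.sum_prod_type, Fin.sum_univ_two, Matrix.add_apply, Matrix.smul_apply,
    Matrix.kroneckerMap_apply, Matrix.one_apply, Matrix.cons_val', Matrix.cons_val_zero,
    Matrix.cons_val_one, Matrix.head_cons, Matrix.head_fin_const, Matrix.empty_val',
    Matrix.cons_val_fin_one, smul_eq_mul]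
  norm_num [Prod.ext_iff, Fin.ext_iff, ← Complex.ofReal_cos, ← Complex.ofReal_sin, Complex.conj_ofReal, Complex.I_mul_I]
  ring_nf at h ⊢
  have hI4 : (Complex.I)^4 = 1 := by norm_num [pow_succ, Complex.I_mul_I]
  have hI3 : (Complex.I)^3 = -Complex.I := by norm_num [pow_succ, Complex.I_mul_I]
  try simp only [Complex.I_sq, hI3, hI4]
  linear_combination (-(Real.sin (θA * (1/2)) * Real.sin (θB * (1/2))) : ℂ) * h

lemma e1 (θ : ℝ) : ‖Ustrat θ 0 0 0 0‖ ^ 2 = Real.cos (θ/2)^2 := by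
  simp [Ustrat, ← Complex.ofReal_cos, Complex.norm_real, _root_.sq_abs]
lemma e2 (θ : ℝ) : ‖Ustrat θ 0 0 1 0‖ ^ 2 = 1 - Real.cos (θ/2)^2 := by
  simp [Ustrat, _root_.map_mul, ← Complex.ofReal_sin, Complex.norm_real, mul_pow, _root_.sq_abs, Real.sin_sq]


/-- Classical subgame: for classical strategies the EWL outcome probabilities factorize into
the classical mixed-strategy probabilities, independently of γ. -/
theorem stmt_11 (γ : ℝ) (hγ : γ ∈ Set.Icc 0 (Real.pi / 2))
    (θA θB : ℝ) (hθA : θA ∈ Set.Icc 0 Real.pi) (hθB : θB ∈ Set.Icc 0 Real.pi) :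
    (∀ i j : Fin 2,
      ‖amp γ (Ustrat θA 0 0) (Ustrat θB 0 0) i j‖ ^ 2
        = ‖Ustrat θA 0 0 i 0‖ ^ 2 * ‖Ustrat θB 0 0 j 0‖ ^ 2) ∧
    (‖amp γ (Ustrat θA 0 0) (Ustrat θB 0 0) 0 0‖ ^ 2
        = Real.cos (θA / 2) ^ 2 * Real.cos (θB / 2) ^ 2 ∧
      ‖amp γ (Ustrat θA 0 0) (Ustrat θB 0 0) 0 1‖ ^ 2
        = Real.cos (θA / 2) ^ 2 * (1 - Real.cos (θB / 2) ^ 2) ∧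
      ‖amp γ (Ustrat θA 0 0) (Ustrat θB 0 0) 1 0‖ ^ 2
        = (1 - Real.cos (θA / 2) ^ 2) * Real.cos (θB / 2) ^ 2 ∧
      ‖amp γ (Ustrat θA 0 0) (Ustrat θB 0 0) 1 1‖ ^ 2
        = (1 - Real.cos (θA / 2) ^ 2) * (1 - Real.cos (θB / 2) ^ 2)) := by

  have a00 : ‖amp γ (Ustrat θA 0 0) (Ustrat θB 0 0) 0 0‖ ^ 2
      = Real.cos (θA / 2) ^ 2 * Real.cos (θB / 2) ^ 2 := by
    rw [amp00]; simp [_root_.map_mul, ← Complex.ofReal_cos, Complex.norm_real, mul_pow, _root_.sq_abs]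
  have a01 : ‖amp γ (Ustrat θA 0 0) (Ustrat θB 0 0) 0 1‖ ^ 2
      = Real.cos (θA / 2) ^ 2 * (1 - Real.cos (θB / 2) ^ 2) := by
    rw [amp01]; simp [_root_.map_mul, ← Complex.ofReal_cos, ← Complex.ofReal_sin, Complex.norm_real, mul_pow, _root_.sq_abs, Real.sin_sq]
  have a10 : ‖amp γ (Ustrat θA 0 0) (Ustrat θB 0 0) 1 0‖ ^ 2
      = (1 - Real.cos (θA / 2) ^ 2) * Real.cos (θB / 2) ^ 2 := by
    rw [amp10]; simp [_root_.map_mul, ← Complex.ofReal_cos, ← Complex.ofReal_sin, Complex.norm_real, mul_pow, _root_.sq_abs, Real.sin_sq]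
  have a11 : ‖amp γ (Ustrat θA 0 0) (Ustrat θB 0 0) 1 1‖ ^ 2
      = (1 - Real.cos (θA / 2) ^ 2) * (1 - Real.cos (θB / 2) ^ 2) := by
    rw [amp11]; simp [_root_.map_mul, ← Complex.ofReal_cos, ← Complex.ofReal_sin, Complex.norm_real, mul_pow, _root_.sq_abs, Real.sin_sq]
  refine ⟨?_, a00, a01, a10, a11⟩
  intro i j
  fin_cases i <;> fin_cases j <;>
    simp only [Fin.mk_zero, Fin.mk_one, Fin.isValue, a00, a01, a10, a11, e1, e2]
end
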